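/- arXiv:0910.5446 — 4 statements merged into one kernel-verified Lean document; each statement's English description precedes it below -/
import Mathlib

section
/- If m: Γ̂ → ℕ satisfies the consistency equation m(ω) = Σ_{α*(ζ)=ω} m(ζ) a.e., α* is ergodic with respect to Haar measure, and m vanishes on a set of positive measure, then m = 0 a.e. -/
/-!
If `m ω = 0`, the consistency equation forces `m` to vanish on the whole fibre `A⁻¹ {ω}`, since
that fibre is a coset of the finite kernel and each `m ζ` is one of its finitely many summands.
So the zero set `S` of `m` satisfies `A⁻¹ S ⊆ S` almost everywhere, and ergodicity makes `S`
null or conull; the first is excluded by assumption.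
-/

open MeasureTheory

lemma MonoidHom.finite_preimage_singleton_apply {G H : Type*} [Group G] [Group H]
    (f : G →* H) [Finite f.ker] (x : G) : (f ⁻¹' {f x}).Finite :=
  Finite.of_equiv _ (f.fiberEquivKer x).symm

lemma ae_le_comp_of_ae_eq_tsum_fiber {α : Type*} [MeasurableSpace α] {μ : Measure α} {f : α → α}
    (hf : Measure.QuasiMeasurePreserving f μ μ) (hfib : ∀ x, (f ⁻¹' {f x}).Finite) {m : α → ℕ}
    (hcons : ∀ᵐ ω ∂μ, m ω = ∑' ζ : {ζ // f ζ = ω}, m ζ) :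
    ∀ᵐ x ∂μ, m x ≤ m (f x) := by
  filter_upwards [hf.ae hcons] with x hx
  have : Finite {ζ // f ζ = f x} := hfib x
  exact hx ▸ (Summable.of_finite (f := fun ζ : {ζ // f ζ = f x} ↦ m ζ)).le_tsum' ⟨x, rfl⟩

lemma Ergodic.ae_eq_zero_of_ae_le_comp {α : Type*} [MeasurableSpace α] {μ : Measure α}
    [IsFiniteMeasure μ] {f : α → α} (hf : Ergodic f μ) {m : α → ℕ} (hm : Measurable m)
    (hmono : ∀ᵐ x ∂μ, m x ≤ m (f x)) (hzero : 0 < μ {x | m x = 0}) :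
    m =ᵐ[μ] 0 := by
  have hS : MeasurableSet {x | m x = 0} := hm (measurableSet_singleton 0)
  have hinv : f ⁻¹' {x | m x = 0} ≤ᵐ[μ] {x | m x = 0} := by
    filter_upwards [hmono] with x hx hfx
    exact Nat.eq_zero_of_le_zero (hx.trans_eq hfx)
  rcases hf.ae_empty_or_univ_of_preimage_ae_le' hS.nullMeasurableSet hinv (measure_ne_top _ _)
    with hnull | hconull
  · exact absurd (measure_congr hnull) (by simpa using hzero.ne')
  · exact ae_eq_univ.mp hconull

theorem stmt3_general {G : Type*} [TopologicalSpace G] [CommGroup G]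
    [CompactSpace G] [MeasurableSpace G]
    (μ : Measure G) [μ.IsHaarMeasure]
    (A : G →* G)
    (N : ℕ) (hN : 1 < N) (hker : Nat.card A.ker = N)
    (herg : Ergodic A μ)
    (m : G → ℕ) (hm : Measurable m)
    (hcons : ∀ᵐ ω ∂μ, m ω = ∑' ζ : {ζ : G // A ζ = ω}, m (ζ : G))
    (hvanish : 0 < μ {ω | m ω = 0}) :
    m =ᵐ[μ] 0 := by
  have : Finite A.ker := Nat.finite_of_card_ne_zero (by omega)
  exact herg.ae_eq_zero_of_ae_le_comp hm
    (ae_le_comp_of_ae_eq_tsum_fiber herg.quasiMeasurePreserving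
      A.finite_preimage_singleton_apply hcons) hvanish

/-- If `m : Γ̂ → ℕ` satisfies the consistency equation
`m ω = ∑_{A ζ = ω} m ζ` a.e., `A = α*` is ergodic with respect to Haar measure,
and `m` vanishes on a set of positive measure, then `m = 0` a.e. -/
theorem stmt3 {G : Type*} [TopologicalSpace G] [CommGroup G] [IsTopologicalGroup G]
    [CompactSpace G] [MeasurableSpace G] [BorelSpace G]
    (μ : Measure G) [μ.IsHaarMeasure]
    (A : G →* G) (hAmeas : Measurable A) (hAsurj : Function.Surjective A)
    (N : ℕ) (hN : 1 < N) (hker : Nat.card A.ker = N)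
    (herg : Ergodic A μ)
    (m : G → ℕ) (hm : Measurable m)
    (hcons : ∀ᵐ ω ∂μ, m ω = ∑' ζ : {ζ : G // A ζ = ω}, m (ζ : G))
    (hvanish : 0 < μ {ω | m ω = 0}) :
    m =ᵐ[μ] 0 :=
  stmt3_general μ A N hN hker herg m hm hcons hvanish
end

section
/- Let H be a filter relative to m and α* whose Ruelle operator S_H on ⊕_i L²(σ_i) has a unimodular eigenvector, i.e., there exist F ∈ ⊕ L²(σ_i) and λ ∈ ℂ with |λ| = 1, ‖F(ω)‖ = 1 a.e., and Hᵗ(ω) F(α*(ω)) = λ F(ω) a.e. Then H is equivalent to an eigenfilter: there is a unitary-valued A with H'(ω) = A(α*(ω)) H(ω) A*(ω) satisfying H'₁₁(ω) = λ and H'₁ⱼ(ω) = 0 for j > 1, a.e. -/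
/-!
Let `U(ω)` be a unitary matrix with first row `F(ω)`, obtained measurably from a Householder
reflection. The first row of `U(α* ω) H(ω) U(ω)*` is `F(α* ω)ᵀ H(ω) U(ω)* = λ F(ω)ᵀ U(ω)*`
by the eigenvector equation, and this is `λ e₀ᵀ` because `U(ω)` is unitary.
-/

open MeasureTheory Finset ComplexConjugate

noncomputable section

lemma tsum_eq_sum_range {M : Type*} [AddCommMonoid M] [TopologicalSpace M] {f : ℕ → M} {n : ℕ}
    (hf : ∀ k, n ≤ k → f k = 0) : ∑' k, f k = ∑ k ∈ range n, f k :=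
  tsum_eq_sum fun k hk => hf k (by simpa using hk)

lemma tsum_tsum_comm_of_eq_zero {M : Type*} [AddCommMonoid M] [TopologicalSpace M]
    {f : ℕ → ℕ → M} {p q : ℕ} (hf : ∀ k l, p ≤ k ∨ q ≤ l → f k l = 0) :
    ∑' k, ∑' l, f k l = ∑' l, ∑' k, f k l := by
  have hrow : ∀ k, ∑' l, f k l = ∑ l ∈ range q, f k l :=
    fun k => tsum_eq_sum_range fun l hl => hf k l (Or.inr hl)
  have hcol : ∀ l, ∑' k, f k l = ∑ k ∈ range p, f k l :=
    fun l => tsum_eq_sum_range fun k hk => hf k l (Or.inl hk)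
  simp only [hrow, hcol]
  rw [tsum_eq_sum_range fun k hk => sum_eq_zero fun l _ => hf k l (Or.inl hk),
    tsum_eq_sum_range fun l hl => sum_eq_zero fun k _ => hf k l (Or.inr hl), sum_comm]

lemma sum_range_norm_sq_eq_one {v : ℕ → ℂ} {n : ℕ} (hv : ∀ i, n ≤ i → v i = 0)
    (hnorm : ∑' i, ‖v i‖ ^ 2 = 1) : ∑ i ∈ range n, ‖v i‖ ^ 2 = 1 := by
  rwa [tsum_eq_sum_range fun i hi => by simp [hv i hi]] at hnorm

lemma tsum_tsum_mul_mul_conj_eq_of_eigen {H V W : ℕ → ℕ → ℂ} {p q : ℕ} {lam : ℂ}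
    (hH : ∀ k l, p ≤ k ∨ q ≤ l → H k l = 0) (heig : ∀ l, ∑' k, H k l * W 0 k = lam * V 0 l)
    (j : ℕ) :
    ∑' k, ∑' l, W 0 k * H k l * conj (V j l) = lam * ∑' l, V 0 l * conj (V j l) := by
  calc ∑' k, ∑' l, W 0 k * H k l * conj (V j l)
      = ∑' l, (∑' k, H k l * W 0 k) * conj (V j l) := by
        rw [tsum_tsum_comm_of_eq_zero fun k l h => by rw [hH k l h, mul_zero, zero_mul]]
        simp only [← tsum_mul_right, mul_comm (W 0 _)]
    _ = lam * ∑' l, V 0 l * conj (V j l) := by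
        simp only [heig, mul_assoc, tsum_mul_left]

-- With `‖w‖² = 2c` this is the reflection in the hyperplane orthogonal to `conj w`.
def householder (w : ℕ → ℂ) (c : ℝ) (i j : ℕ) : ℂ :=
  (if i = j then 1 else 0) - conj (w i) * w j / c

lemma conj_householder (w : ℕ → ℂ) (c : ℝ) (i j : ℕ) :
    conj (householder w c i j) = householder w c j i := by
  simp only [householder, map_sub, apply_ite conj, map_one, map_zero, map_div₀, map_mul,
    Complex.conj_conj, Complex.conj_ofReal, eq_comm (a := i)]
  ring

lemma sum_householder_mul_householder {w : ℕ → ℂ} {c : ℝ} {n i j : ℕ} (hc : c ≠ 0)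
    (hw : ∑ k ∈ range n, ‖w k‖ ^ 2 = 2 * c) (hi : i < n) (hj : j < n) :
    ∑ k ∈ range n, householder w c i k * householder w c k j = if i = j then 1 else 0 := by
  have hc' : (c : ℂ) ≠ 0 := by exact_mod_cast hc
  have expand : ∀ k, householder w c i k * householder w c k j
      = (if i = k then (if k = j then 1 else 0) else 0)
        - (if i = k then conj (w k) * w j / c else 0)
        - (if k = j then conj (w i) * w k / c else 0)
        + conj (w i) * w j / c ^ 2 * ((‖w k‖ ^ 2 : ℝ) : ℂ) := by
    intro k
    rw [Complex.ofReal_pow, ← Complex.mul_conj', householder, householder]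
    split_ifs <;> ring
  rw [sum_congr rfl fun k _ => expand k, sum_add_distrib, sum_sub_distrib, sum_sub_distrib,
    ← mul_sum, ← Complex.ofReal_sum, hw, sum_ite_eq, sum_ite_eq, sum_ite_eq',
    if_pos (mem_range.mpr hi), if_pos (mem_range.mpr hi), if_pos (mem_range.mpr hj)]
  field_simp
  push_cast
  ring

def unitPhase (z : ℂ) : ℂ := Complex.exp (z.arg * Complex.I)

lemma norm_unitPhase (z : ℂ) : ‖unitPhase z‖ = 1 := Complex.norm_exp_ofReal_mul_I _

lemma conj_unitPhase_mul_self (z : ℂ) : conj (unitPhase z) * unitPhase z = 1 := by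
  rw [Complex.conj_mul', norm_unitPhase, Complex.ofReal_one, one_pow]

lemma norm_mul_unitPhase (z : ℂ) : ‖z‖ * unitPhase z = z := Complex.norm_mul_exp_arg_mul_I z

def reflectionVector (v : ℕ → ℂ) (k : ℕ) : ℂ := v k + if k = 0 then unitPhase (v 0) else 0

lemma sum_range_norm_reflectionVector_sq {v : ℕ → ℂ} {n : ℕ} (hn : 0 < n)
    (hv : ∑ k ∈ range n, ‖v k‖ ^ 2 = 1) :
    ∑ k ∈ range n, ‖reflectionVector v k‖ ^ 2 = 2 * (1 + ‖v 0‖) := by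
  obtain ⟨n, rfl⟩ := Nat.exists_eq_add_of_lt hn
  have h0 : ‖v 0 + unitPhase (v 0)‖ = 1 + ‖v 0‖ := by
    calc ‖v 0 + unitPhase (v 0)‖ = ‖((1 + ‖v 0‖ : ℝ) : ℂ) * unitPhase (v 0)‖ := by
          rw [Complex.ofReal_add, add_mul, norm_mul_unitPhase, Complex.ofReal_one, one_mul,
            add_comm]
      _ = 1 + ‖v 0‖ := by
          rw [norm_mul, norm_unitPhase, mul_one, Complex.norm_real,
            Real.norm_of_nonneg (by positivity)]
  rw [sum_range_succ'] at hv ⊢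
  simp only [reflectionVector, Nat.add_one_ne_zero, ↓reduceIte, add_zero, h0]
  linear_combination hv

/- The phase in `w = v + unitPhase (v 0) e₀` rules out cancellation, so `‖w‖² = 2 (1 + ‖v 0‖)`
for a unit vector `v`, and the factor `-unitPhase (v 0)` makes the first row equal to `v`. -/
def firstRowUnitary (v : ℕ → ℂ) (n : ℕ) (i j : ℕ) : ℂ :=
  if i < n ∧ j < n then -unitPhase (v 0) * householder (reflectionVector v) (1 + ‖v 0‖) i j
  else 0

section firstRowUnitary

variable {v : ℕ → ℂ} {n : ℕ}

lemma firstRowUnitary_eq_zero {i j : ℕ} (h : n ≤ i ∨ n ≤ j) : firstRowUnitary v n i j = 0 :=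
  if_neg fun ⟨hi, hj⟩ => by omega

lemma firstRowUnitary_zero_left (hv : ∀ j, n ≤ j → v j = 0) (j : ℕ) :
    firstRowUnitary v n 0 j = v j := by
  rcases lt_or_ge j n with hj | hj
  · have hc : ((1 + ‖v 0‖ : ℝ) : ℂ) ≠ 0 := Complex.ofReal_ne_zero.mpr (by positivity)
    simp only [firstRowUnitary, householder, reflectionVector,
      if_pos (⟨by omega, hj⟩ : 0 < n ∧ j < n), ↓reduceIte]
    set α := unitPhase (v 0)
    have key : α * conj (v 0 + α) = (1 + ‖v 0‖ : ℝ) := by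
      calc α * conj (v 0 + α) = α * conj (‖v 0‖ * α + α) := by rw [norm_mul_unitPhase]
        _ = _ := by
          rw [map_add, map_mul, Complex.conj_ofReal]
          push_cast
          linear_combination (1 + (‖v 0‖ : ℂ)) * conj_unitPhase_mul_self (v 0)
    calc _ = -α * (if 0 = j then 1 else 0) + α * conj (v 0 + α)
          * (v j + if j = 0 then α else 0) / ((1 + ‖v 0‖ : ℝ) : ℂ) := by ring
      _ = v j := by
        rw [key, mul_div_cancel_left₀ _ hc]
        split_ifs <;> first | omega | ring
  · rw [firstRowUnitary_eq_zero (Or.inr hj), hv j hj]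

lemma firstRowUnitary_mul_conj {i j k : ℕ} (hi : i < n) (hj : j < n) (hk : k < n) :
    firstRowUnitary v n i k * conj (firstRowUnitary v n j k)
      = householder (reflectionVector v) (1 + ‖v 0‖) i k
        * householder (reflectionVector v) (1 + ‖v 0‖) k j := by
  simp only [firstRowUnitary, if_pos (And.intro hi hk), if_pos (And.intro hj hk), map_mul,
    map_neg, conj_householder]
  linear_combination householder (reflectionVector v) (1 + ‖v 0‖) i k
    * householder (reflectionVector v) (1 + ‖v 0‖) k j * conj_unitPhase_mul_self (v 0)

lemma conj_mul_firstRowUnitary {i j k : ℕ} (hi : i < n) (hj : j < n) (hk : k < n) :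
    conj (firstRowUnitary v n k i) * firstRowUnitary v n k j
      = householder (reflectionVector v) (1 + ‖v 0‖) i k
        * householder (reflectionVector v) (1 + ‖v 0‖) k j := by
  simp only [firstRowUnitary, if_pos (And.intro hk hi), if_pos (And.intro hk hj), map_mul,
    map_neg, conj_householder]
  linear_combination householder (reflectionVector v) (1 + ‖v 0‖) i k
    * householder (reflectionVector v) (1 + ‖v 0‖) k j * conj_unitPhase_mul_self (v 0)

lemma tsum_firstRowUnitary_mul_conj (hv : ∑ k ∈ range n, ‖v k‖ ^ 2 = 1) (i j : ℕ) :
    ∑' k, firstRowUnitary v n i k * conj (firstRowUnitary v n j k)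
      = if i = j ∧ i < n then 1 else 0 := by
  rw [tsum_eq_sum_range fun k hk => by rw [firstRowUnitary_eq_zero (Or.inr hk), zero_mul]]
  by_cases hij : i < n ∧ j < n
  · rw [sum_congr rfl fun k hk => firstRowUnitary_mul_conj hij.1 hij.2 (mem_range.1 hk),
      sum_householder_mul_householder (by positivity)
        (sum_range_norm_reflectionVector_sq (by omega) hv) hij.1 hij.2]
    simp [hij.1]
  · refine (sum_eq_zero fun k _ => ?_).trans (if_neg ?_).symm
    · rcases not_and_or.1 hij with h | h
      · rw [firstRowUnitary_eq_zero (Or.inl (not_lt.1 h)), zero_mul]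
      · rw [firstRowUnitary_eq_zero (Or.inl (not_lt.1 h)), map_zero, mul_zero]
    · rintro ⟨rfl, h⟩
      exact hij ⟨h, h⟩

lemma tsum_conj_mul_firstRowUnitary (hv : ∑ k ∈ range n, ‖v k‖ ^ 2 = 1) (i j : ℕ) :
    ∑' k, conj (firstRowUnitary v n k i) * firstRowUnitary v n k j
      = if i = j ∧ i < n then 1 else 0 := by
  rw [tsum_eq_sum_range fun k hk => by
    rw [firstRowUnitary_eq_zero (Or.inl hk), map_zero, zero_mul]]
  by_cases hij : i < n ∧ j < n
  · rw [sum_congr rfl fun k hk => conj_mul_firstRowUnitary hij.1 hij.2 (mem_range.1 hk),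
      sum_householder_mul_householder (by positivity)
        (sum_range_norm_reflectionVector_sq (by omega) hv) hij.1 hij.2]
    simp [hij.1]
  · refine (sum_eq_zero fun k _ => ?_).trans (if_neg ?_).symm
    · rcases not_and_or.1 hij with h | h
      · rw [firstRowUnitary_eq_zero (Or.inr (not_lt.1 h)), map_zero, zero_mul]
      · rw [firstRowUnitary_eq_zero (Or.inr (not_lt.1 h)), mul_zero]
    · rintro ⟨rfl, h⟩
      exact hij ⟨h, h⟩

end firstRowUnitary

lemma measurable_firstRowUnitary {α : Type*} [MeasurableSpace α] {v : α → ℕ → ℂ} {n : α → ℕ}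
    (hv : ∀ i, Measurable fun a => v a i) (hn : Measurable n) (i j : ℕ) :
    Measurable fun a => firstRowUnitary (v a) (n a) i j := by
  have hphase : Measurable fun a => unitPhase (v a 0) := by
    unfold unitPhase
    fun_prop
  refine Measurable.ite ((measurableSet_lt measurable_const hn).inter
    (measurableSet_lt measurable_const hn)) ?_ measurable_const
  have hw : ∀ k, Measurable fun a => reflectionVector (v a) k := by
    intro k
    by_cases hk : k = 0 <;> simp only [reflectionVector, hk, ↓reduceIte] <;> fun_prop
  exact hphase.neg.mul (measurable_const.sub
    (((Complex.continuous_conj.measurable.comp (hw i)).mul (hw j)).div (by fun_prop)))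

end

theorem stmt8_general {G : Type*} [CommGroup G] [MeasurableSpace G]
    (μ : Measure G)
    (A : G →* G)
    (m : G → ℕ) (hm : Measurable m)
    (H : G → ℕ → ℕ → ℂ)
    (hHsupp : ∀ ω i j, m (A ω) ≤ i ∨ m ω ≤ j → H ω i j = 0)
    -- the unimodular eigenvector:
    (F : G → ℕ → ℂ) (hFmeas : ∀ i, Measurable fun ω => F ω i)
    (hFsupp : ∀ ω i, m ω ≤ i → F ω i = 0)
    (hFnorm : ∀ᵐ ω ∂μ, (∑' i : ℕ, ‖F ω i‖ ^ 2) = 1)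
    (lam : ℂ)
    (heig : ∀ᵐ ω ∂μ, ∀ i : ℕ, (∑' j : ℕ, H ω j i * F (A ω) j) = lam * F ω i) :
    ∃ Amat H' : G → ℕ → ℕ → ℂ,
      (∀ i j, Measurable fun ω => Amat ω i j) ∧
      -- `Amat(ω) = diag(A₁(ω), 0)` with `A₁(ω)` unitary of dimension `m ω`:
      (∀ ω i j, m ω ≤ i ∨ m ω ≤ j → Amat ω i j = 0) ∧
      (∀ᵐ ω ∂μ, ∀ i j, (∑' k : ℕ, Amat ω i k * (starRingEnd ℂ) (Amat ω j k))
        = if i = j ∧ i < m ω then 1 else 0) ∧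
      (∀ᵐ ω ∂μ, ∀ i j, (∑' k : ℕ, (starRingEnd ℂ) (Amat ω k i) * Amat ω k j)
        = if i = j ∧ i < m ω then 1 else 0) ∧
      -- `H' = Amat∘A · H · Amat*` is the equivalent filter:
      (∀ ω i j, H' ω i j
        = ∑' k : ℕ, ∑' l : ℕ, Amat (A ω) i k * H ω k l * (starRingEnd ℂ) (Amat ω j l)) ∧
      -- and `H'` is an eigenfilter with eigenvalue `λ`:
      (∀ᵐ ω ∂μ, H' ω 0 0 = lam ∧ ∀ j : ℕ, 0 < j → H' ω 0 j = 0) := by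
  have hunit : ∀ᵐ ω ∂μ, ∑ i ∈ range (m ω), ‖F ω i‖ ^ 2 = 1 :=
    hFnorm.mono fun ω => sum_range_norm_sq_eq_one (hFsupp ω)
  let U ω := firstRowUnitary (F ω) (m ω)
  refine ⟨U, fun ω i j => ∑' k, ∑' l, U (A ω) i k * H ω k l * conj (U ω j l),
    measurable_firstRowUnitary hFmeas hm, fun ω i j => firstRowUnitary_eq_zero,
    hunit.mono fun ω => tsum_firstRowUnitary_mul_conj,
    hunit.mono fun ω => tsum_conj_mul_firstRowUnitary, fun ω i j => rfl, ?_⟩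
  filter_upwards [hunit, heig] with ω hω heigω
  have hrow (j : ℕ) := tsum_tsum_mul_mul_conj_eq_of_eigen (V := U ω) (W := U (A ω)) (hHsupp ω)
    (fun l => by simpa only [U, firstRowUnitary_zero_left (hFsupp _)] using heigω l) j
  have hpos : 0 < m ω := Nat.pos_of_ne_zero fun h => by simp [h] at hω
  have horth (j : ℕ) : ∑' l, U ω 0 l * conj (U ω j l) = if 0 = j ∧ 0 < m ω then 1 else 0 :=
    tsum_firstRowUnitary_mul_conj hω 0 j
  simp only [hrow, horth]
  exact ⟨by simp [hpos], fun j hj => by simp [hj.ne]⟩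

/-- if the Ruelle operator `S_H` of a filter `H` (relative to `m` and
`α* = A`) has a unimodular eigenvector, i.e. there are `F ∈ ⊕ L²(σ_i)` and `λ ∈ ℂ` with
`|λ| = 1`, `‖F ω‖ = 1` a.e., and `Hᵗ(ω) F(A ω) = λ F(ω)` a.e., then `H` is equivalent to
an eigenfilter: there is a measurable block-unitary `Amat` such that
`H'(ω) = Amat(A ω) H(ω) Amat(ω)*` satisfies `H'₁₁ = λ` and `H'₁ⱼ = 0` for `j > 1` a.e. -/
theorem stmt8 {G : Type*} [TopologicalSpace G] [CommGroup G] [IsTopologicalGroup G]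
    [CompactSpace G] [MeasurableSpace G] [BorelSpace G]
    (μ : Measure G) [μ.IsHaarMeasure]
    (A : G →* G) (hAmeas : Measurable A) (hAsurj : Function.Surjective A)
    (N : ℕ) (hN : 1 < N) (hker : Nat.card A.ker = N)
    (hpres : MeasurePreserving A μ μ)
    (m : G → ℕ) (hm : Measurable m)
    (H : G → ℕ → ℕ → ℂ) (hHmeas : ∀ i j, Measurable fun ω => H ω i j)
    (hHsupp : ∀ ω i j, m (A ω) ≤ i ∨ m ω ≤ j → H ω i j = 0)
    (hfilt : ∀ᵐ ω ∂μ, ∀ i j, (∑' ζ : {ζ : G // A ζ = ω}, ∑' k : ℕ,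
        H (ζ : G) i k * (starRingEnd ℂ) (H (ζ : G) j k))
      = if i = j ∧ i < m ω then (N : ℂ) else 0)
    -- the unimodular eigenvector:
    (F : G → ℕ → ℂ) (hFmeas : ∀ i, Measurable fun ω => F ω i)
    (hFsupp : ∀ ω i, m ω ≤ i → F ω i = 0)
    (hFnorm : ∀ᵐ ω ∂μ, (∑' i : ℕ, ‖F ω i‖ ^ 2) = 1)
    (lam : ℂ) (hlam : ‖lam‖ = 1)
    (heig : ∀ᵐ ω ∂μ, ∀ i : ℕ, (∑' j : ℕ, H ω j i * F (A ω) j) = lam * F ω i) :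
    ∃ Amat H' : G → ℕ → ℕ → ℂ,
      (∀ i j, Measurable fun ω => Amat ω i j) ∧
      -- `Amat(ω) = diag(A₁(ω), 0)` with `A₁(ω)` unitary of dimension `m ω`:
      (∀ ω i j, m ω ≤ i ∨ m ω ≤ j → Amat ω i j = 0) ∧
      (∀ᵐ ω ∂μ, ∀ i j, (∑' k : ℕ, Amat ω i k * (starRingEnd ℂ) (Amat ω j k))
        = if i = j ∧ i < m ω then 1 else 0) ∧
      (∀ᵐ ω ∂μ, ∀ i j, (∑' k : ℕ, (starRingEnd ℂ) (Amat ω k i) * Amat ω k j)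
        = if i = j ∧ i < m ω then 1 else 0) ∧
      -- `H' = Amat∘A · H · Amat*` is the equivalent filter:
      (∀ ω i j, H' ω i j
        = ∑' k : ℕ, ∑' l : ℕ, Amat (A ω) i k * H ω k l * (starRingEnd ℂ) (Amat ω j l)) ∧
      -- and `H'` is an eigenfilter with eigenvalue `λ`:
      (∀ᵐ ω ∂μ, H' ω 0 0 = lam ∧ ∀ j : ℕ, 0 < j → H' ω 0 j = 0) :=
  stmt8_general μ A m hm H hHsupp F hFmeas hFsupp hFnorm lam heig
end

section
/- If H' is an eigenfilter with eigenvalue λ and H'(ω) A(ω) = A(α*(ω)) H(ω) for a measurable A of the form diag(A₁, 0) with A₁(ω) unitary, then the first row F(ω) of A(ω) satisfies Hᵗ(ω) F(α*(ω)) = λ F(ω) with ‖F(ω)‖ = 1 a.e.; hence S_H has a unimodular eigenvector and is not a pure isometry. -/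
open MeasureTheory

theorem Complex.tsum_mul_conj_self (f : ℕ → ℂ) :
    ∑' k, f k * starRingEnd ℂ (f k) = ((∑' k, ‖f k‖ ^ 2 : ℝ) : ℂ) := by
  rw [Complex.ofReal_tsum]
  exact tsum_congr fun k => by rw [Complex.mul_conj', Complex.ofReal_pow]

theorem tsum_norm_sq_eq_one_of_tsum_mul_conj_self {f : ℕ → ℂ}
    (h : ∑' k, f k * starRingEnd ℂ (f k) = 1) : ∑' k, ‖f k‖ ^ 2 = 1 := by
  rw [Complex.tsum_mul_conj_self] at h
  exact_mod_cast h

theorem tsum_mul_eq_of_apply_pos_eq_zero {r b : ℕ → ℂ} {lam : ℂ} (h0 : r 0 = lam)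
    (hpos : ∀ j, 0 < j → r j = 0) : ∑' k, r k * b k = lam * b 0 := by
  rw [tsum_eq_single 0 fun k hk => by rw [hpos k (Nat.pos_of_ne_zero hk), zero_mul], h0]

theorem stmt9_general {G : Type*} [CommGroup G] [MeasurableSpace G]
    (μ : Measure G)
    (A : G →* G)
    (m : G → ℕ) (hm1 : ∀ᵐ ω ∂μ, 1 ≤ m ω)
    (H : G → ℕ → ℕ → ℂ)
    (H' : G → ℕ → ℕ → ℂ)
    -- `H'` is an eigenfilter with eigenvalue `λ`, `|λ| = 1`:
    (lam : ℂ)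
    (heigf : ∀ᵐ ω ∂μ, H' ω 0 0 = lam ∧ ∀ j : ℕ, 0 < j → H' ω 0 j = 0)
    (Amat : G → ℕ → ℕ → ℂ)
    -- `Amat(ω) = diag(A₁(ω), 0)` with `A₁(ω)` unitary of dimension `m ω`:
    (hArows : ∀ᵐ ω ∂μ, ∀ i j, (∑' k : ℕ, Amat ω i k * (starRingEnd ℂ) (Amat ω j k))
      = if i = j ∧ i < m ω then 1 else 0)
    -- the intertwining `H'(ω) Amat(ω) = Amat(A ω) H(ω)`:
    (hintw : ∀ᵐ ω ∂μ, ∀ i j, (∑' k : ℕ, H' ω i k * Amat ω k j)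
      = ∑' k : ℕ, Amat (A ω) i k * H ω k j) :
    -- the first row of `Amat` is a unimodular eigenvector of `S_H`:
    ∃ F : G → ℕ → ℂ,
      (∀ ω i, F ω i = Amat ω 0 i) ∧
      (∀ᵐ ω ∂μ, (∑' i : ℕ, ‖F ω i‖ ^ 2) = 1) ∧
      (∀ᵐ ω ∂μ, ∀ i : ℕ, (∑' j : ℕ, H ω j i * F (A ω) j) = lam * F ω i) := by
  refine ⟨fun ω i => Amat ω 0 i, fun _ _ => rfl, ?_, ?_⟩
  · filter_upwards [hArows, hm1] with ω hrows hpos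
    have hrow := hrows 0 0
    rw [if_pos ⟨rfl, hpos⟩] at hrow
    exact tsum_norm_sq_eq_one_of_tsum_mul_conj_self hrow
  · filter_upwards [hintw, heigf] with ω hrel ⟨h0, hzero⟩ i
    -- row 0 of `H' Amat = (Amat ∘ A) H`, where row 0 of `H'` is `(λ, 0, 0, …)`
    rw [← tsum_mul_eq_of_apply_pos_eq_zero (b := fun k => Amat ω k i) h0 hzero, hrel 0 i]
    exact tsum_congr fun j => mul_comm _ _

/-- if `H'` is an eigenfilter with eigenvalue `λ` and
`H'(ω) Amat(ω) = Amat(A ω) H(ω)` for a measurable `Amat = diag(A₁, 0)` with `A₁(ω)`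
unitary of dimension `m ω`, then the first row `F(ω) = (Amat(ω))_{row 1}` is a unimodular
eigenvector of the Ruelle operator `S_H`: `Hᵗ(ω) F(A ω) = λ F(ω)` and `‖F ω‖ = 1` a.e.
(hence, by the Baggett–Furst–Merrill–Packer criterion, `S_H` is not a pure isometry). -/
theorem stmt9 {G : Type*} [TopologicalSpace G] [CommGroup G] [IsTopologicalGroup G]
    [CompactSpace G] [MeasurableSpace G] [BorelSpace G]
    (μ : Measure G) [μ.IsHaarMeasure]
    (A : G →* G) (hAmeas : Measurable A) (hAsurj : Function.Surjective A)
    (N : ℕ) (hN : 1 < N) (hker : Nat.card A.ker = N)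
    (hpres : MeasurePreserving A μ μ)
    (m : G → ℕ) (hm : Measurable m) (hm1 : ∀ᵐ ω ∂μ, 1 ≤ m ω)
    (H : G → ℕ → ℕ → ℂ) (hHmeas : ∀ i j, Measurable fun ω => H ω i j)
    (hHsupp : ∀ ω i j, m (A ω) ≤ i ∨ m ω ≤ j → H ω i j = 0)
    (H' : G → ℕ → ℕ → ℂ) (hH'supp : ∀ ω i j, m (A ω) ≤ i ∨ m ω ≤ j → H' ω i j = 0)
    -- `H'` is an eigenfilter with eigenvalue `λ`, `|λ| = 1`:
    (lam : ℂ) (hlam : ‖lam‖ = 1)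
    (heigf : ∀ᵐ ω ∂μ, H' ω 0 0 = lam ∧ ∀ j : ℕ, 0 < j → H' ω 0 j = 0)
    (Amat : G → ℕ → ℕ → ℂ) (hAmatmeas : ∀ i j, Measurable fun ω => Amat ω i j)
    -- `Amat(ω) = diag(A₁(ω), 0)` with `A₁(ω)` unitary of dimension `m ω`:
    (hAblock : ∀ ω i j, m ω ≤ i ∨ m ω ≤ j → Amat ω i j = 0)
    (hArows : ∀ᵐ ω ∂μ, ∀ i j, (∑' k : ℕ, Amat ω i k * (starRingEnd ℂ) (Amat ω j k))
      = if i = j ∧ i < m ω then 1 else 0)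
    (hAcols : ∀ᵐ ω ∂μ, ∀ i j, (∑' k : ℕ, (starRingEnd ℂ) (Amat ω k i) * Amat ω k j)
      = if i = j ∧ i < m ω then 1 else 0)
    -- the intertwining `H'(ω) Amat(ω) = Amat(A ω) H(ω)`:
    (hintw : ∀ᵐ ω ∂μ, ∀ i j, (∑' k : ℕ, H' ω i k * Amat ω k j)
      = ∑' k : ℕ, Amat (A ω) i k * H ω k j) :
    -- the first row of `Amat` is a unimodular eigenvector of `S_H`:
    ∃ F : G → ℕ → ℂ,
      (∀ ω i, F ω i = Amat ω 0 i) ∧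
      (∀ᵐ ω ∂μ, (∑' i : ℕ, ‖F ω i‖ ^ 2) = 1) ∧
      (∀ᵐ ω ∂μ, ∀ i : ℕ, (∑' j : ℕ, H ω j i * F (A ω) j) = lam * F ω i) :=
  stmt9_general μ A m hm1 H H' lam heigf Amat hArows hintw
end

section
/- There is no measurable function a: 𝕋 → ℂ with |a(ω)| = 1 a.e. satisfying −h(ω) = a(2ω) h(ω) ā(ω) a.e., where h(ω) = (1/√2)(1 + e^{−2πiω}) is the Haar low-pass filter; hence the filter −h is not equivalent to the Haar filter h. -/
/-!
On the set where `h ≠ 0`, which has full measure, the relation `-h(ω) = a(2ω) h(ω) ā(ω)` for a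
unimodular `a` says exactly `a(2ω) = -a(ω)`. Then `a` is invariant under `ω ↦ 4ω`, which is ergodic
on the circle, so `a` is a.e. a constant `c`; pulling `a = c` back along the measure-preserving
doubling map gives `c = a(2ω) = -c`, so `c = 0`, contradicting `|a| = 1`.
-/

open MeasureTheory Real

/-- The Haar low-pass filter `h(ω) = (1/√2)(1 + e^{-2πiω})`, as a 1-periodic function
on `ℝ` (identifying `𝕋 = ℝ/ℤ` with 1-periodic functions). -/
noncomputable def haarFilter (x : ℝ) : ℂ :=
  (1 / (Real.sqrt 2 : ℂ)) * (1 + Complex.exp (-2 * Real.pi * Complex.I * (x : ℂ)))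

open Filter Function

theorem Ergodic.ae_eq_zero_of_comp_ae_eq_neg {α E : Type*} [MeasurableSpace α] {μ : Measure α}
    [TopologicalSpace E] [TopologicalSpace.MetrizableSpace E] [AddGroup E] [IsAddTorsionFree E]
    {f : α → α} {g : α → E} (hf : Measure.QuasiMeasurePreserving f μ μ) (hff : Ergodic (f ∘ f) μ)
    (hg : AEStronglyMeasurable g μ) (hneg : g ∘ f =ᵐ[μ] -g) : g =ᵐ[μ] 0 := by
  have hinv : g ∘ (f ∘ f) =ᵐ[μ] g := by
    filter_upwards [hf.ae_eq_comp hneg, hneg] with x h₁ h₂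
    simp only [comp_apply, Pi.neg_apply] at h₁ h₂ ⊢
    rw [h₁, h₂, neg_neg]
  obtain ⟨c, hc⟩ := hff.quasiErgodic.ae_eq_const_of_ae_eq_comp_ae hg hinv
  filter_upwards [hc, hf.ae_eq_comp hc, hneg] with x h₁ h₂ h₃
  simp only [comp_apply, const_apply, Pi.neg_apply] at h₁ h₂ h₃
  exact self_eq_neg.mp (h₁.trans (h₂.symm.trans h₃))

theorem AddCircle.ae_eq_zero_of_nsmul_ae_eq_neg {T : ℝ} [Fact (0 < T)] {E : Type*}
    [TopologicalSpace E] [TopologicalSpace.MetrizableSpace E] [AddGroup E] [IsAddTorsionFree E]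
    {n : ℕ} (hn : 1 < n) {g : AddCircle T → E} (hg : AEStronglyMeasurable g)
    (hneg : ∀ᵐ y, g (n • y) = -g y) : g =ᵐ[volume] 0 := by
  have hsq : (fun y : AddCircle T ↦ n • y) ∘ (fun y ↦ n • y) = fun y ↦ (n * n) • y := by
    ext y
    simp [mul_smul]
  refine Ergodic.ae_eq_zero_of_comp_ae_eq_neg
    (AddCircle.ergodic_nsmul hn).quasiMeasurePreserving ?_ hg hneg
  rw [hsq]
  exact AddCircle.ergodic_nsmul (one_lt_mul'' hn hn)

theorem AddCircle.ae_of_ae_coe {T : ℝ} [Fact (0 < T)] {p : AddCircle T → Prop}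
    (hp : MeasurableSet {y | p y}) (h : ∀ᵐ x : ℝ, p x) : ∀ᵐ y : AddCircle T, p y := by
  rw [← (AddCircle.measurePreserving_mk T 0).map_eq,
    ae_map_iff AddCircle.measurable_mk'.aemeasurable hp]
  exact ae_restrict_of_ae h

theorem Function.Periodic.measurable_lift {T : ℝ} {β : Type*} [MeasurableSpace β] {a : ℝ → β}
    (ha : Periodic a T) (hm : Measurable a) : Measurable (ha.lift : AddCircle T → β) :=
  QuotientAddGroup.measurable_from_quotient.2 (by convert hm; ext x; exact ha.lift_coe x)

theorem haarFilter_eq_zero {x : ℝ} (hx : haarFilter x = 0) : ∃ n : ℤ, x = n + 1 / 2 := by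
  have hexp : Complex.exp (-2 * π * Complex.I * x) = Complex.exp (π * Complex.I) := by
    have hsqrt : (1 / (√2 : ℂ)) ≠ 0 := by simp
    rw [Complex.exp_pi_mul_I]
    linear_combination (mul_eq_zero.1 hx).resolve_left hsqrt
  obtain ⟨n, hn⟩ := Complex.exp_eq_exp_iff_exists_int.1 hexp
  refine ⟨-n - 1, ?_⟩
  have hπI : (π : ℂ) * Complex.I ≠ 0 := by simp [Real.pi_ne_zero]
  apply Complex.ofReal_injective
  apply mul_left_cancel₀ hπI
  push_cast
  linear_combination -hn / 2

theorem haarFilter_ae_ne_zero : ∀ᵐ x : ℝ, haarFilter x ≠ 0 :=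
  ((Set.countable_range fun n : ℤ ↦ (n + 1 / 2 : ℝ)).ae_notMem volume).mono
    fun _ hx h ↦ hx (haarFilter_eq_zero h |>.imp fun _ ↦ Eq.symm)

theorem eq_neg_of_neg_eq_mul_mul_conj {a b h : ℂ} (ha : ‖a‖ = 1) (hh : h ≠ 0)
    (heq : -h = b * h * starRingEnd ℂ a) : b = -a := by
  have hunit : a * starRingEnd ℂ a = 1 := by
    rw [Complex.mul_conj', ha]
    norm_num
  apply mul_right_cancel₀ hh
  linear_combination (-(b * h)) * hunit - a * heq

/-- there is no measurable unimodular function `a` on `𝕋` with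
`-h(ω) = a(2ω) h(ω) conj(a(ω))` a.e., where `h` is the Haar low-pass filter; hence the
filter `-h` is not equivalent to the Haar filter `h`. -/
theorem stmt14 :
    ¬ ∃ a : ℝ → ℂ, Measurable a ∧ Function.Periodic a 1 ∧
      (∀ᵐ x : ℝ, ‖a x‖ = 1) ∧
      (∀ᵐ x : ℝ, -haarFilter x = a (2 * x) * haarFilter x * (starRingEnd ℂ) (a x)) := by
  rintro ⟨a, ham, hper, hnorm, heq⟩
  have hdouble : ∀ᵐ x : ℝ, a (2 * x) = -a x := by
    filter_upwards [hnorm, heq, haarFilter_ae_ne_zero] with x hx₁ hx hh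
    exact eq_neg_of_neg_eq_mul_mul_conj hx₁ hh hx
  have hg := hper.measurable_lift ham
  have hgnorm : ∀ᵐ y : AddCircle (1 : ℝ), ‖hper.lift y‖ = 1 :=
    AddCircle.ae_of_ae_coe (hg.norm (measurableSet_singleton 1))
      (hnorm.mono fun x hx ↦ by rwa [hper.lift_coe])
  have hgneg : ∀ᵐ y : AddCircle (1 : ℝ), hper.lift (2 • y) = -hper.lift y :=
    AddCircle.ae_of_ae_coe (measurableSet_eq_fun (hg.comp (measurable_const_smul 2)) hg.neg)
      (hdouble.mono fun x hx ↦ by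
        rw [← AddCircle.coe_nsmul, hper.lift_coe, hper.lift_coe, nsmul_eq_mul, Nat.cast_two, hx])
  obtain ⟨y, hy₁, hy₀⟩ := (hgnorm.and
    (AddCircle.ae_eq_zero_of_nsmul_ae_eq_neg one_lt_two hg.aestronglyMeasurable hgneg)).exists
  simp [hy₀] at hy₁
end
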